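/- Let G be a trivalent, 2-edge-connected finite graph and A ⊆ V(G) a subset whose induced subgraph contains a cycle. Then A is dependent in the graph curve matroid M_G. -/

import Mathlib

/-- A finite undirected multigraph on vertex type `V` with edge type `E`:
each edge has an unordered pair of endpoints (possibly a loop). -/
structure Multigraph (V E : Type*) where
  ends : E → Sym2 V

namespace Multigraph

variable {V E : Type*} (G : Multigraph V E)

/-- `δ(A)`: the set of edges incident to at least one vertex of `A`. -/
def inc (A : Set V) : Set E := {e | ∃ v ∈ A, v ∈ G.ends e}

/-- Number of connected components of the spanning subgraph of `G`
with edge set `B` (on the full vertex set `V`). -/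
noncomputable def numComponentsEdges (B : Set E) : ℕ :=
  Nat.card (Quot (fun u v : V => ∃ e ∈ B, G.ends e = s(u, v)))

/-- Number of connected components `ω(S)` of the subgraph of `G` induced on `S`. -/
noncomputable def numComponentsSub (S : Set V) : ℕ :=
  Nat.card (Quot (fun x y : S => ∃ e, G.ends e = s(x.1, y.1)))

/-- Rank function of the cycle (graphic) matroid of `G`:
`r(B) = |V| - (number of components of (V, B))`. -/
noncomputable def cycleRank (B : Set E) : ℕ :=
  Nat.card V - G.numComponentsEdges B

/-- Rank function `r*` of the bond (cographic) matroid of `G`: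
`r*(B) = |B| + r(E - B) - r(E)`. -/
noncomputable def bondRank (B : Set E) : ℕ :=
  B.ncard + G.cycleRank Bᶜ - G.cycleRank Set.univ

/-- `G` is connected. -/
def Connected : Prop := G.numComponentsEdges Set.univ = 1

/-- `G` is 2-edge-connected: it is connected and deleting any single edge
leaves it connected. -/
def TwoEdgeConnected : Prop :=
  G.Connected ∧ ∀ e : E, G.numComponentsEdges {e}ᶜ = 1

/-- `G` is 2-vertex-connected: it is connected and deleting any single vertex
leaves it connected. -/
def TwoVertexConnected : Prop :=
  G.Connected ∧ ∀ v : V, G.numComponentsSub {v}ᶜ = 1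

/-- `G` has no loops. -/
def Loopless : Prop := ∀ e : E, ¬ (G.ends e).IsDiag

open Classical in
/-- The degree of a vertex, with loops counting twice. -/
noncomputable def degree [Fintype E] (v : V) : ℕ :=
  ∑ e : E, (if G.ends e = s(v, v) then 2 else if v ∈ G.ends e then 1 else 0)

/-- `G` is trivalent: every vertex has degree `3`. -/
def Trivalent [Fintype E] : Prop := ∀ v : V, G.degree v = 3

/-- `A ⊆ V` is the vertex set of a cycle `v₁, …, vₙ, v₁` of `G`: there are
pairwise distinct vertices `f 0, …, f (n-1)` with range `A` and pairwise
distinct edges joining cyclically consecutive vertices. -/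
def IsCycleSet (A : Set V) : Prop :=
  ∃ n : ℕ, 0 < n ∧ ∃ f : ZMod n → V, Function.Injective f ∧ Set.range f = A ∧
    ∃ e : ZMod n → E, Function.Injective e ∧ ∀ i, G.ends (e i) = s(f i, f (i + 1))

/-- The subgraph induced on `A` contains a cycle. -/
def Cyclic (A : Set V) : Prop := ∃ C ⊆ A, G.IsCycleSet C

/-- The subgraph induced on `A` is acyclic (a forest). -/
def Acyclic (A : Set V) : Prop := ¬ G.Cyclic A

/-- `A` is a circuit of the graph curve matroid `M_G`: `A` is nonempty,
`r*(δ(A)) ≤ |A|`, and no proper nonempty subset `A'` satisfies `r*(δ(A')) ≤ |A'|`. -/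
noncomputable def IsCircuitMG (A : Set V) : Prop :=
  A.Nonempty ∧ G.bondRank (G.inc A) ≤ A.ncard ∧
    ∀ A' : Set V, A' ⊂ A → A'.Nonempty → A'.ncard < G.bondRank (G.inc A')

/-- `A` is dependent in the graph curve matroid `M_G`, i.e. contains a circuit. -/
noncomputable def DepMG (A : Set V) : Prop := ∃ C ⊆ A, G.IsCircuitMG C

/-- `A` is independent in the graph curve matroid `M_G`. -/
noncomputable def IndepMG (A : Set V) : Prop := ¬ G.DepMG A

/-- The rank function of the graph curve matroid `M_G`:
the maximal cardinality of an independent subset. -/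
noncomputable def rankMG (A : Set V) : ℕ :=
  sSup {n | ∃ I ⊆ A, G.IndepMG I ∧ I.ncard = n}

/-- `B` is a basis of the graph curve matroid `M_G`:
a maximal independent set. -/
noncomputable def IsBasisMG (B : Set V) : Prop :=
  G.IndepMG B ∧ ∀ I : Set V, G.IndepMG I → B ⊆ I → I = B

end Multigraph

/-! For a cycle `C` of length `n` in a trivalent graph, `δ(C)` consists of the `n` cycle edges and
at most one further edge at each vertex, so `|δ(C)| ≤ 2n`, while deleting `δ(C)` isolates every
vertex of `C`. For connected `G`, `r*(B) = |B| + 1 - ω(E ∖ B)`, hence `r*(δ(C)) ≤ n`, and a minimal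
nonempty subset of `C` with this property is a circuit of `M_G` inside `A`. -/

namespace Multigraph

variable {V E : Type*} (G : Multigraph V E)

open Classical in
/-- The multiplicity of `v` as an end of `e` (the summand of `G.degree v`). -/
noncomputable def incidence (v : V) (e : E) : ℕ :=
  if G.ends e = s(v, v) then 2 else if v ∈ G.ends e then 1 else 0

open Classical in
lemma incidence_eq_of_ends_eq {e : E} {u w : V} (h : G.ends e = s(u, w)) (v : V) :
    G.incidence v e = (if v = u then 1 else 0) + (if v = w then 1 else 0) := by
  unfold incidence
  rw [h]
  obtain rfl | hu := eq_or_ne v u <;> obtain rfl | hw := eq_or_ne v w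
  · simp
  · simp [hw, hw.symm]
  · simp [hu, hu.symm]
  · simp [hu, hw, hu.symm, hw.symm]

lemma one_le_incidence {v : V} {e : E} (hv : v ∈ G.ends e) : 1 ≤ G.incidence v e := by
  unfold incidence
  split_ifs <;> omega

lemma sum_incidence_eq_two {e : E} {s : Finset V} (hs : ∀ v ∈ G.ends e, v ∈ s) :
    ∑ v ∈ s, G.incidence v e = 2 := by
  classical
  induction h : G.ends e using Sym2.ind with
  | h u w =>
    rw [h] at hs
    simp [G.incidence_eq_of_ends_eq h, Finset.sum_add_distrib, Finset.sum_ite_eq',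
      hs u (Sym2.mem_mk_left u w), hs w (Sym2.mem_mk_right u w)]

lemma sum_sum_incidence [Fintype E] (h3 : G.Trivalent) (s : Finset V) :
    ∑ e, ∑ v ∈ s, G.incidence v e = 3 * s.card := by
  rw [Finset.sum_comm, Finset.sum_congr rfl fun v _ => show ∑ e, G.incidence v e = 3 from h3 v,
    Finset.sum_const, smul_eq_mul, mul_comm]

/-- Double counting the incidences at `C` in a trivalent graph: every edge of `δ(C)` has at least
one end in `C`, and every edge of `R` has both. -/
lemma ncard_inc_add_ncard_le [Fintype V] [Fintype E] (h3 : G.Trivalent) {C : Set V} {R : Set E}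
    (hR : ∀ e ∈ R, ∀ v ∈ G.ends e, v ∈ C) : (G.inc C).ncard + R.ncard ≤ 3 * C.ncard := by
  classical
  let w : E → ℕ := fun e => ∑ v ∈ C.toFinset, G.incidence v e
  have hRinc : R.toFinset ⊆ (G.inc C).toFinset := by
    intro e he
    rw [Set.mem_toFinset] at he ⊢
    exact ⟨_, hR e he _ (Sym2.out_fst_mem _), Sym2.out_fst_mem _⟩
  have hw : ∀ e ∈ (G.inc C).toFinset, 1 + (if e ∈ R.toFinset then 1 else 0) ≤ w e := by
    intro e he
    split_ifs with heR
    · exact (G.sum_incidence_eq_two fun v hv => Set.mem_toFinset.2 <|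
        hR e (Set.mem_toFinset.1 heR) v hv).ge
    · obtain ⟨v, hvC, hve⟩ := Set.mem_toFinset.1 he
      exact (G.one_le_incidence hve).trans <|
        Finset.single_le_sum (f := (G.incidence · e)) (fun _ _ => Nat.zero_le _)
          (Set.mem_toFinset.2 hvC)
  calc (G.inc C).ncard + R.ncard
      = ∑ e ∈ (G.inc C).toFinset, (1 + if e ∈ R.toFinset then 1 else 0) := by
        rw [Finset.sum_add_distrib, Finset.sum_ite_mem, Finset.inter_eq_right.2 hRinc]
        simp [Set.ncard_eq_toFinset_card']
    _ ≤ ∑ e ∈ (G.inc C).toFinset, w e := Finset.sum_le_sum hw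
    _ ≤ ∑ e, w e := Finset.sum_le_sum_of_subset (Finset.subset_univ _)
    _ = 3 * C.ncard := by rw [G.sum_sum_incidence h3, Set.ncard_eq_toFinset_card']

lemma numComponentsEdges_le_card [Finite V] (B : Set E) : G.numComponentsEdges B ≤ Nat.card V :=
  Nat.card_le_card_of_surjective _ Quot.mk_surjective

lemma bondRank_eq_of_connected [Finite V] (hG : G.Connected) (B : Set E) :
    G.bondRank B = B.ncard + 1 - G.numComponentsEdges Bᶜ := by
  have hV := G.numComponentsEdges_le_card Set.univ
  have hB := G.numComponentsEdges_le_card Bᶜ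
  unfold Connected at hG
  unfold bondRank cycleRank
  omega

/-- Deleting `δ(C)` isolates each vertex of `C`, and a vertex `w ∉ C` lies in yet another
component. -/
lemma ncard_insert_le_numComponentsEdges_compl_inc [Finite V] (C : Set V) (w : V) :
    (insert w C).ncard ≤ G.numComponentsEdges (G.inc C)ᶜ := by
  classical
  let r : V → V → Prop := fun u v => ∃ e ∈ (G.inc C)ᶜ, G.ends e = s(u, v)
  let g : V → V := fun v => if v ∈ C then v else w
  have hg : ∀ u v, r u v → g u = g v := by
    rintro u v ⟨e, he, huv⟩
    have hu : u ∉ C := fun hu => he ⟨u, hu, huv ▸ Sym2.mem_mk_left u v⟩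
    have hv : v ∉ C := fun hv => he ⟨v, hv, huv ▸ Sym2.mem_mk_right u v⟩
    simp [g, hu, hv]
  have hfix : ∀ v ∈ insert w C, g v = v := by
    rintro v (rfl | hv) <;> simp [g, *]
  have hinj : Function.Injective fun v : ↥(insert w C) => Quot.mk r v.1 := by
    intro a b hab
    have := congrArg (Quot.lift g hg) hab
    simp only [hfix a a.2, hfix b b.2] at this
    exact Subtype.ext this
  rw [← Nat.card_coe_set_eq]
  exact Nat.card_le_card_of_injective _ hinj

/-- A minimal nonempty subset `C ⊆ D` with `r*(δ(C)) ≤ |C|` is a circuit. -/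
lemma depMG_of_bondRank_inc_le [Finite V] {D : Set V} (hD : D.Nonempty)
    (hDr : G.bondRank (G.inc D) ≤ D.ncard) : G.DepMG D := by
  obtain ⟨C, hCD, ⟨hC, hCr⟩, hmin⟩ := exists_minimal_le_of_wellFoundedLT
    (fun A : Set V => A.Nonempty ∧ G.bondRank (G.inc A) ≤ A.ncard) D ⟨hD, hDr⟩
  refine ⟨C, hCD, hC, hCr, fun A hAC hA => ?_⟩
  by_contra! hAr
  exact hAC.not_subset (hmin ⟨hA, hAr⟩ hAC.subset)

variable {G}

lemma DepMG.mono {A B : Set V} (hAB : A ⊆ B) (hA : G.DepMG A) : G.DepMG B :=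
  let ⟨C, hCA, hC⟩ := hA
  ⟨C, hCA.trans hAB, hC⟩

lemma IsCycleSet.nonempty {C : Set V} (hC : G.IsCycleSet C) : C.Nonempty := by
  obtain ⟨n, hn, f, -, rfl, -⟩ := hC
  have : NeZero n := ⟨hn.ne'⟩
  exact Set.range_nonempty f

lemma IsCycleSet.exists_edges_ncard_eq {C : Set V} (hC : G.IsCycleSet C) :
    ∃ R : Set E, R.ncard = C.ncard ∧ ∀ e ∈ R, ∀ v ∈ G.ends e, v ∈ C := by
  obtain ⟨n, -, f, hf, rfl, ce, hce, hends⟩ := hC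
  refine ⟨Set.range ce, by rw [Set.ncard_range_of_injective hf, Set.ncard_range_of_injective hce],
    ?_⟩
  rintro - ⟨i, rfl⟩ v hv
  rw [hends i, Sym2.mem_iff] at hv
  rcases hv with rfl | rfl <;> exact Set.mem_range_self _

/-- If `C = V`, no component survives outside `C`, but then every edge has both ends in `C`, so
`2|δ(C)| ≤ 3|C|`. -/
lemma IsCycleSet.bondRank_inc_le [Fintype V] [Fintype E] (h3 : G.Trivalent) (hG : G.Connected)
    {C : Set V} (hC : G.IsCycleSet C) : G.bondRank (G.inc C) ≤ C.ncard := by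
  rw [G.bondRank_eq_of_connected hG]
  by_cases hCV : C = Set.univ
  · obtain ⟨w, -⟩ := hC.nonempty
    have hCpos : 0 < C.ncard := (Set.ncard_pos).2 hC.nonempty
    have hB := G.ncard_inc_add_ncard_le h3 (R := G.inc C) fun _ _ v _ => hCV ▸ Set.mem_univ v
    have hω := G.ncard_insert_le_numComponentsEdges_compl_inc C w
    rw [Set.insert_eq_of_mem (hCV ▸ Set.mem_univ w)] at hω
    omega
  · obtain ⟨w, hw⟩ := (Set.ne_univ_iff_exists_notMem C).1 hCV
    obtain ⟨R, hRC, hR⟩ := hC.exists_edges_ncard_eq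
    have hB := G.ncard_inc_add_ncard_le h3 hR
    have hω := G.ncard_insert_le_numComponentsEdges_compl_inc C w
    rw [Set.ncard_insert_of_notMem hw] at hω
    omega

end Multigraph

/-- For a trivalent 2-edge-connected finite graph `G`, any
vertex set whose induced subgraph contains a cycle is dependent in `M_G`. -/
theorem cyclic_depMG {V E : Type*} [Fintype V] [Fintype E]
    (G : Multigraph V E) (h3 : G.Trivalent) (h2 : G.TwoEdgeConnected)
    (A : Set V) (hA : G.Cyclic A) :
    G.DepMG A := by
  obtain ⟨C, hCA, hC⟩ := hA
  exact (G.depMG_of_bondRank_inc_le hC.nonempty (hC.bondRank_inc_le h3 h2.1)).mono hCA
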